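/- The 5×5 real matrix M = [[−4,0,0,0,4],[0,−2,√2,0,0],[0,−√2,0,√2,0],[0,0,−√2,2,0],[−4,0,0,0,4]] satisfies M³ = 0, M² ≠ 0, and rank(M) = 3; hence its only eigenvalue is 0 with geometric multiplicity 2 and Jordan type 3+2. -/

import Mathlib

/-!
In the coordinates {1, 2, 3} ⊕ {0, 4} the matrix is block diagonal: a 3 × 3 block of nilpotency
index 3 and the 2 × 2 block [[-4, 4], [-4, 4]] of square zero. Hence M³ = 0, and the kernel is
spanned by one vector from each block, so rank–nullity gives rank 5 - 2 = 3; every eigenvalue of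
a nilpotent matrix is 0.
-/

open Matrix Real

noncomputable def M13 : Matrix (Fin 5) (Fin 5) ℝ :=
  !![-4, 0, 0, 0, 4;
     0, -2, Real.sqrt 2, 0, 0;
     0, -Real.sqrt 2, 0, Real.sqrt 2, 0;
     0, 0, -Real.sqrt 2, 2, 0;
     -4, 0, 0, 0, 4]

theorem Matrix.rank_add_finrank_ker_mulVecLin {K n : Type*} [Field K] [Fintype n]
    (A : Matrix n n K) :
    A.rank + Module.finrank K (LinearMap.ker A.mulVecLin) = Fintype.card n := by
  rw [Matrix.rank, LinearMap.finrank_range_add_finrank_ker, Module.finrank_fintype_fun_eq_card]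

theorem Matrix.eq_zero_of_hasEigenvalue_of_isNilpotent {K n : Type*} [Field K] [Fintype n]
    [DecidableEq n] {A : Matrix n n K} (hA : IsNilpotent A) {μ : K}
    (hμ : Module.End.HasEigenvalue A.mulVecLin μ) : μ = 0 :=
  (hμ.isNilpotent_of_isNilpotent ((Matrix.isNilpotent_toLin'_iff A).mpr hA)).eq_zero

lemma M13_pow_three : M13 ^ 3 = 0 := by
  ext i j
  fin_cases i <;> fin_cases j <;>
    simp [pow_succ, M13, Matrix.mul_apply, Fin.sum_univ_five] <;> ring_nf <;> norm_num

lemma M13_sq_one_one : (M13 ^ 2) 1 1 = 2 := by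
  simp [sq, M13, Matrix.mul_apply, Fin.sum_univ_five]; norm_num

lemma M13_mulVec (v : Fin 5 → ℝ) :
    M13 *ᵥ v = ![4 * (v 4 - v 0), √2 * v 2 - 2 * v 1, √2 * (v 3 - v 1), 2 * v 3 - √2 * v 2,
      4 * (v 4 - v 0)] := by
  ext i
  fin_cases i <;> simp [M13, Matrix.mulVec, dotProduct, Fin.sum_univ_five] <;> ring

noncomputable def kerVec₁ : Fin 5 → ℝ := ![1, 0, 0, 0, 1]
noncomputable def kerVec₂ : Fin 5 → ℝ := ![0, 1, √2, 1, 0]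

lemma M13_mulVec_kerVec₁ : M13 *ᵥ kerVec₁ = 0 := by
  ext i
  fin_cases i <;> simp [M13_mulVec, kerVec₁]

lemma M13_mulVec_kerVec₂ : M13 *ᵥ kerVec₂ = 0 := by
  ext i
  fin_cases i <;> simp [M13_mulVec, kerVec₂]

lemma eq_kerVec_combination_of_M13_mulVec_eq_zero {v : Fin 5 → ℝ} (hv : M13 *ᵥ v = 0) :
    v = v 0 • kerVec₁ + v 1 • kerVec₂ := by
  rw [M13_mulVec] at hv
  have h0 := congrFun hv 0
  have h1 := congrFun hv 1
  have h2 := congrFun hv 2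
  simp only [Fin.isValue, cons_val_zero, cons_val_one, cons_val, Pi.zero_apply, mul_eq_zero,
    OfNat.ofNat_ne_zero, false_or, Nat.ofNat_nonneg, sqrt_eq_zero] at h0 h1 h2
  have h1' : v 2 = √2 * v 1 := by
    apply mul_left_cancel₀ (by positivity : √2 ≠ 0)
    linear_combination h1 - v 1 * Real.mul_self_sqrt zero_le_two
  ext i
  fin_cases i <;> simp [kerVec₁, kerVec₂] <;> linarith [mul_comm (v 1) √2]

lemma ker_M13 : LinearMap.ker M13.mulVecLin = Submodule.span ℝ (Set.range ![kerVec₁, kerVec₂]) := by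
  apply le_antisymm
  · intro v hv
    rw [eq_kerVec_combination_of_M13_mulVec_eq_zero hv]
    exact add_mem (Submodule.smul_mem _ _ (Submodule.subset_span ⟨0, rfl⟩))
      (Submodule.smul_mem _ _ (Submodule.subset_span ⟨1, rfl⟩))
  · rw [Submodule.span_le, Set.range_subset_iff]
    intro i
    fin_cases i
    exacts [M13_mulVec_kerVec₁, M13_mulVec_kerVec₂]

lemma linearIndependent_kerVec : LinearIndependent ℝ ![kerVec₁, kerVec₂] := by
  rw [LinearIndependent.pair_iff]
  intro a b h
  simpa [kerVec₁, kerVec₂] using And.intro (congrFun h 0) (congrFun h 1)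

lemma finrank_ker_M13 : Module.finrank ℝ (LinearMap.ker M13.mulVecLin) = 2 := by
  rw [ker_M13, finrank_span_eq_card linearIndependent_kerVec, Fintype.card_fin]

theorem stmt_13 :
    M13 ^ 3 = 0 ∧ M13 ^ 2 ≠ 0 ∧ M13.rank = 3 ∧
    (∀ μ : ℝ, Module.End.HasEigenvalue M13.mulVecLin μ → μ = 0) ∧
    Module.finrank ℝ ↥(LinearMap.ker M13.mulVecLin) = 2 := by
  refine ⟨M13_pow_three, fun h => by simpa [h] using M13_sq_one_one, ?_,
    fun μ hμ => eq_zero_of_hasEigenvalue_of_isNilpotent ⟨3, M13_pow_three⟩ hμ, finrank_ker_M13⟩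
  have h := M13.rank_add_finrank_ker_mulVecLin
  rw [finrank_ker_M13, Fintype.card_fin] at h
  omega
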